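/- arXiv:1606.03200 — 4 statements merged into one kernel-verified Lean document; each statement's English description precedes it below -/
import Mathlib

section
/- Let $d, n, t$ be positive integers with $n \geq d \geq 1$, and suppose $y \leq t/2$ and $\sum_{i=0}^{y}\binom{t}{i} \geq \binom{n}{d}$. Then $y \geq d\log_2(n/d) / \log_2(et/y)$. -/
open Real Finset

lemma pow_div_le_choose : ∀ (d n : ℕ), d ≤ n → ((n : ℝ) / d) ^ d ≤ n.choose d := by
  intro d
  induction d with
  | zero => intro n _; simp
  | succ d ih =>
    intro n hdn
    obtain ⟨m, rfl⟩ : ∃ m, n = m + 1 := ⟨n - 1, by omega⟩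
    have hdm : d ≤ m := by omega
    have key : ((m + 1 : ℝ)) / (d + 1) * (m.choose d) = ((m+1).choose (d+1) : ℝ) := by
      have := Nat.add_one_mul_choose_eq m d
      have : ((m+1 : ℕ) : ℝ) * (m.choose d) = ((m+1).choose (d+1) : ℝ) * (d+1 : ℕ) := by
        exact_mod_cast congrArg (Nat.cast : ℕ → ℝ) this
      push_cast at this ⊢
      field_simp
      linarith [this]
    have step : ((m + 1 : ℝ) / (d + 1)) ^ d ≤ (m.choose d : ℝ) := by
      rcases Nat.eq_zero_or_pos d with hd0 | hd0
      · subst hd0; simp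
      · have h1 : (m + 1 : ℝ) / (d + 1) ≤ (m : ℝ) / d := by
          rw [div_le_div_iff₀ (by positivity) (by positivity)]
          have : (d : ℝ) ≤ m := by exact_mod_cast hdm
          have hdp : (0:ℝ) < d := by exact_mod_cast hd0
          nlinarith
        calc ((m + 1 : ℝ) / (d + 1)) ^ d ≤ ((m : ℝ) / d) ^ d := by
              apply pow_le_pow_left₀ (by positivity) h1
          _ ≤ (m.choose d : ℝ) := ih m hdm
    push_cast
    calc ((m + 1 : ℝ) / (d + 1)) ^ (d + 1)
        = ((m + 1 : ℝ) / (d + 1)) * ((m + 1 : ℝ) / (d + 1)) ^ d := by ring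
      _ ≤ ((m + 1 : ℝ) / (d + 1)) * (m.choose d : ℝ) := by
          apply mul_le_mul_of_nonneg_left step (by positivity)
      _ = ((m+1).choose (d+1) : ℝ) := key

lemma sum_choose_le_pow (t y : ℕ) (hy : 1 ≤ y) (hyt : 2 * y ≤ t) :
    (∑ i ∈ Finset.range (y + 1), (t.choose i : ℝ)) ≤ (Real.exp 1 * t / y) ^ y := by
  have ht : 0 < t := by omega
  have hyR : (0 : ℝ) < y := by exact_mod_cast hy
  have htR : (0 : ℝ) < t := by exact_mod_cast ht
  set x : ℝ := (y : ℝ) / t with hx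
  have hx0 : 0 < x := by positivity
  have hx1 : x ≤ 1 := by
    rw [hx, div_le_one htR]
    exact_mod_cast by omega
  have h1 : x ^ y * ∑ i ∈ Finset.range (y + 1), (t.choose i : ℝ)
      ≤ ∑ i ∈ Finset.range (y + 1), (t.choose i : ℝ) * x ^ i := by
    rw [Finset.mul_sum]
    apply Finset.sum_le_sum
    intro i hi
    rw [Finset.mem_range] at hi
    have : x ^ y ≤ x ^ i := pow_le_pow_of_le_one hx0.le hx1 (by omega)
    have hcp : (0:ℝ) < t.choose i := by exact_mod_cast Nat.choose_pos (show i ≤ t by omega)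
    nlinarith
  have h2 : ∑ i ∈ Finset.range (y + 1), (t.choose i : ℝ) * x ^ i
      ≤ ∑ i ∈ Finset.range (t + 1), (t.choose i : ℝ) * x ^ i := by
    apply Finset.sum_le_sum_of_subset_of_nonneg
    · exact Finset.range_subset_range.mpr (by omega)
    · intro i _ _; positivity
  have h3 : ∑ i ∈ Finset.range (t + 1), (t.choose i : ℝ) * x ^ i = (x + 1) ^ t := by
    rw [add_pow]
    apply Finset.sum_congr rfl
    intro i _
    rw [one_pow]
    ring
  have h4 : (x + 1) ^ t ≤ Real.exp 1 ^ y := by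
    calc (x + 1) ^ t ≤ (Real.exp x) ^ t := by
          exact pow_le_pow_left₀ (by positivity) (by linarith [Real.add_one_le_exp x]) t
      _ = Real.exp (x * t) := by rw [← Real.exp_nat_mul]; ring_nf
      _ = Real.exp 1 ^ y := by
          rw [hx, div_mul_cancel₀ _ htR.ne', ← Real.exp_nat_mul]; ring_nf
  have hsum : x ^ y * ∑ i ∈ Finset.range (y + 1), (t.choose i : ℝ) ≤ Real.exp 1 ^ y :=
    h1.trans (h2.trans (h3 ▸ h4))
  have hxy : (0 : ℝ) < x ^ y := by positivity
  rw [← le_div_iff₀' hxy] at hsum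
  refine hsum.trans (le_of_eq ?_)
  rw [← div_pow]
  congr 1
  rw [hx]
  field_simp

theorem adaptive_lower_bound (d n t y : ℕ) (hd : 1 ≤ d) (hdn : d ≤ n) (ht : 0 < t)
    (hyt : 2 * y ≤ t)
    (hsum : (n.choose d : ℝ) ≤ ∑ i ∈ Finset.range (y + 1), (t.choose i : ℝ)) :
    (y : ℝ) ≥ (d : ℝ) * Real.logb 2 ((n : ℝ) / d) / Real.logb 2 (Real.exp 1 * t / y) := by
  have hdR : (0 : ℝ) < d := by exact_mod_cast hd
  have hnd : (1 : ℝ) ≤ (n : ℝ) / d := by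
    rw [le_div_iff₀ hdR]
    simpa using (Nat.cast_le.mpr hdn : (d : ℝ) ≤ n)
  have hpow := pow_div_le_choose d n hdn
  rcases Nat.eq_zero_or_pos y with hy0 | hy1
  · -- y = 0: sum = 1, so choose n d ≤ 1, forcing n = d
    subst hy0
    simp only [Nat.zero_add, zero_add, Finset.range_one, Finset.sum_singleton, Nat.choose_zero_right,
      Nat.cast_one] at hsum
    have hnd1 : ((n : ℝ) / d) ^ d ≤ 1 := hpow.trans hsum
    have : (n : ℝ) / d = 1 := le_antisymm (by
      by_contra h
      push_neg at h
      have := one_lt_pow₀ (n := d) h (by omega)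
      linarith) hnd
    rw [this, Real.logb_one]
    simp
  · have hsum2 := sum_choose_le_pow t y hy1 hyt
    have hyR : (0 : ℝ) < y := by exact_mod_cast hy1
    have hety : (2 : ℝ) ≤ Real.exp 1 * t / y := by
      have h2 : (2 : ℝ) * y ≤ t := by exact_mod_cast hyt
      rw [le_div_iff₀ hyR]
      have he : (2:ℝ) ≤ Real.exp 1 := by linarith [Real.add_one_le_exp 1]
      have htR : (0:ℝ) < t := by exact_mod_cast ht
      have h2' : (2:ℝ) * y ≤ t := h2
      nlinarith
    have hlogb_pos : 0 < Real.logb 2 (Real.exp 1 * t / y) :=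
      Real.logb_pos (by norm_num) (by linarith)
    rw [ge_iff_le, div_le_iff₀ hlogb_pos]
    -- reduce to log inequality
    have hchain : ((n : ℝ) / d) ^ d ≤ (Real.exp 1 * t / y) ^ y :=
      hpow.trans (hsum.trans hsum2)
    have hlog : (d : ℝ) * Real.log ((n : ℝ) / d) ≤ (y : ℝ) * Real.log (Real.exp 1 * t / y) := by
      have := Real.log_le_log (by positivity) hchain
      rwa [Real.log_pow, Real.log_pow] at this
    have hlog2 : (0 : ℝ) < Real.log 2 := Real.log_pos (by norm_num)
    rw [Real.logb, Real.logb]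
    calc (d : ℝ) * (Real.log ((n:ℝ)/d) / Real.log 2)
        = ((d : ℝ) * Real.log ((n:ℝ)/d)) / Real.log 2 := by ring
      _ ≤ ((y : ℝ) * Real.log (Real.exp 1 * t / y)) / Real.log 2 :=
          (div_le_div_iff_of_pos_right hlog2).mpr hlog
      _ = (y : ℝ) * (Real.log (Real.exp 1 * t / y) / Real.log 2) := by ring
end

section
/- Let $\mathcal{F}$ be a $\bar{2}$-separable family on ground set $[t]$ such that the union of any two members has size at most $s \leq t/2$. Then $\binom{|\mathcal{F}|}{2} \leq \sum_{i=1}^{s}\binom{t}{i}$, and consequently $|\mathcal{F}| \leq 2^{(s/2)\log_2(et/s) + 1/2} + 1$. -/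
open Finset Real

lemma comb_count (t s : ℕ) (F : Finset (Finset (Fin t)))
    (hsep : ∀ S S' : Finset (Finset (Fin t)), S ⊆ F → S' ⊆ F → S.card ≤ 2 → S'.card ≤ 2 →
      S.sup id = S'.sup id → S = S')
    (hsize : ∀ A ∈ F, ∀ B ∈ F, (A ∪ B).card ≤ s) :
    F.card.choose 2 ≤ ∑ i ∈ Finset.Icc 1 s, t.choose i := by
  classical
  have hmaps : ∀ P ∈ F.powersetCard 2, P.sup id ∈ (Finset.Icc 1 s).biUnion
      (fun i => (Finset.univ : Finset (Fin t)).powersetCard i) := by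
    intro P hP
    rw [Finset.mem_powersetCard] at hP
    obtain ⟨hPF, hP2⟩ := hP
    obtain ⟨A, B, hAB, rfl⟩ := Finset.card_eq_two.mp hP2
    have hA : A ∈ F := hPF (by simp)
    have hB : B ∈ F := hPF (by simp)
    have hsup : ({A, B} : Finset (Finset (Fin t))).sup id = A ∪ B := by
      simp [Finset.sup_insert, Finset.sup_singleton, Finset.sup_eq_union]
    rw [hsup, Finset.mem_biUnion]
    refine ⟨(A ∪ B).card, Finset.mem_Icc.mpr ⟨?_, hsize A hA B hB⟩, ?_⟩
    · rw [Nat.one_le_iff_ne_zero, Ne, Finset.card_eq_zero]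
      intro h
      obtain ⟨h1, h2⟩ := Finset.union_eq_empty.mp h
      exact hAB (h1.trans h2.symm)
    · rw [Finset.mem_powersetCard]; exact ⟨Finset.subset_univ _, rfl⟩
  have hinj : Set.InjOn (fun P : Finset (Finset (Fin t)) => P.sup id)
      (F.powersetCard 2) := by
    intro P hP Q hQ h
    rw [Finset.mem_coe, Finset.mem_powersetCard] at hP hQ
    exact hsep P Q hP.1 hQ.1 hP.2.le hQ.2.le h
  have hle := Finset.card_le_card_of_injOn _ hmaps hinj
  have hdisj : ∀ i ∈ Finset.Icc 1 s, ∀ j ∈ Finset.Icc 1 s, i ≠ j →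
      Disjoint ((Finset.univ : Finset (Fin t)).powersetCard i)
        ((Finset.univ : Finset (Fin t)).powersetCard j) := by
    intro i _ j _ hij
    rw [Finset.disjoint_left]
    intro X hX hX'
    rw [Finset.mem_powersetCard] at hX hX'
    exact hij (hX.2.symm.trans hX'.2)
  rw [Finset.card_powersetCard, Finset.card_biUnion hdisj] at hle
  simpa [Finset.card_powersetCard, Finset.card_univ] using hle
lemma sum_choose_exp (t s : ℕ) (hs : 0 < s) (hst : 2 * s ≤ t) :
    (∑ i ∈ Finset.Icc 1 s, (t.choose i : ℝ)) ≤ (Real.exp 1 * t / s) ^ s := by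
  have ht : 0 < t := lt_of_lt_of_le (by omega) hst
  have hst' : s ≤ t := by omega
  set x : ℝ := (s : ℝ) / t with hxdef
  have hx0 : 0 < x := by positivity
  have hx1 : x ≤ 1 := by
    rw [div_le_one (by positivity)]
    exact_mod_cast hst'
  have hxt : x * t = s := by
    rw [hxdef]
    field_simp
  have key : (∑ i ∈ Finset.Icc 1 s, (t.choose i : ℝ)) * x ^ s ≤ Real.exp s := by
    calc (∑ i ∈ Finset.Icc 1 s, (t.choose i : ℝ)) * x ^ s
        = ∑ i ∈ Finset.Icc 1 s, (t.choose i : ℝ) * x ^ s := by rw [Finset.sum_mul]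
      _ ≤ ∑ i ∈ Finset.Icc 1 s, (t.choose i : ℝ) * x ^ i := by
          apply Finset.sum_le_sum
          intro i hi
          rw [Finset.mem_Icc] at hi
          exact mul_le_mul_of_nonneg_left
            (pow_le_pow_of_le_one hx0.le hx1 hi.2) (by positivity)
      _ ≤ ∑ i ∈ Finset.range (t + 1), (t.choose i : ℝ) * x ^ i := by
          apply Finset.sum_le_sum_of_subset_of_nonneg
          · intro i hi
            rw [Finset.mem_Icc] at hi
            rw [Finset.mem_range]
            omega
          · intro i _ _
            positivity
      _ = (x + 1) ^ t := by
          rw [add_pow]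
          apply Finset.sum_congr rfl
          intro i hi
          ring
      _ ≤ Real.exp x ^ t := by
          apply pow_le_pow_left₀ (by positivity)
          linarith [Real.add_one_le_exp x]
      _ = Real.exp (x * t) := by
          rw [← Real.exp_nat_mul, mul_comm]
      _ = Real.exp s := by rw [hxt]
  have hxs : 0 < x ^ s := by positivity
  rw [← le_div_iff₀ hxs] at key
  refine key.trans_eq ?_
  have h1 : Real.exp 1 * t / s = Real.exp 1 / x := by
    rw [hxdef]
    field_simp
  rw [h1, ← Real.exp_one_pow, ← div_pow]

theorem two_separable_bound (t s : ℕ) (hs : 0 < s) (hst : 2 * s ≤ t)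
    (F : Finset (Finset (Fin t)))
    (hsep : ∀ S S' : Finset (Finset (Fin t)), S ⊆ F → S' ⊆ F → S.card ≤ 2 → S'.card ≤ 2 →
      S.sup id = S'.sup id → S = S')
    (hsize : ∀ A ∈ F, ∀ B ∈ F, (A ∪ B).card ≤ s) :
    (F.card.choose 2 : ℝ) ≤ ∑ i ∈ Finset.Icc 1 s, (t.choose i : ℝ) ∧
    (F.card : ℝ) ≤
      2 ^ (((s : ℝ) / 2) * Real.logb 2 (Real.exp 1 * t / s) + 1 / 2) + 1 := by
  have hcomb := comb_count t s F hsep hsize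
  have hcomb' : (F.card.choose 2 : ℝ) ≤ ∑ i ∈ Finset.Icc 1 s, (t.choose i : ℝ) := by
    push_cast
    exact_mod_cast hcomb
  refine ⟨hcomb', ?_⟩
  set n := F.card with hn
  set y : ℝ := Real.exp 1 * t / s with hy
  have ht : 0 < t := lt_of_lt_of_le (by omega) hst
  have hy0 : 0 < y := by
    rw [hy]
    positivity
  have hy1 : 1 ≤ y := by
    rw [hy]
    rw [le_div_iff₀ (by positivity)]
    have h1 : (1:ℝ) * s ≤ 1 * t := by
      have : (s:ℝ) ≤ t := by exact_mod_cast (by omega : s ≤ t)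
      linarith
    have he : (1:ℝ) ≤ Real.exp 1 := Real.one_le_exp (by norm_num)
    nlinarith
  have hys : (1:ℝ) ≤ y ^ s := one_le_pow₀ hy1
  -- RHS identity
  have hrpow : (2:ℝ) ^ (((s : ℝ) / 2) * Real.logb 2 y + 1 / 2)
      = Real.sqrt 2 * y ^ ((s : ℝ) / 2) := by
    rw [Real.rpow_add (by norm_num : (0:ℝ) < 2)]
    rw [mul_comm ((s:ℝ)/2) (Real.logb 2 y), Real.rpow_mul (by norm_num : (0:ℝ) ≤ 2)]
    rw [Real.rpow_logb (by norm_num) (by norm_num) hy0]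
    rw [← Real.sqrt_eq_rpow]
    ring
  have hsqrt : Real.sqrt (2 * y ^ s) = Real.sqrt 2 * y ^ ((s : ℝ) / 2) := by
    rw [Real.sqrt_mul (by norm_num : (0:ℝ) ≤ 2)]
    congr 1
    rw [Real.sqrt_eq_rpow, ← Real.rpow_natCast y s, ← Real.rpow_mul hy0.le]
    congr 1
    ring
  rcases Nat.eq_zero_or_pos n with h0 | hpos
  · rw [h0]
    push_cast
    have : (0:ℝ) < 2 ^ (((s : ℝ) / 2) * Real.logb 2 y + 1 / 2) :=
      Real.rpow_pos_of_pos (by norm_num) _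
    linarith
  · have hn1 : (1:ℝ) ≤ n := by exact_mod_cast hpos
    have hchoose : (n.choose 2 : ℝ) ≤ y ^ s :=
      hcomb'.trans (sum_choose_exp t s hs hst)
    have hform : (n.choose 2 : ℝ) = n * (n - 1) / 2 := Nat.cast_choose_two (K := ℝ) n
    have hsq : ((n:ℝ) - 1) ^ 2 ≤ 2 * y ^ s := by
      nlinarith
    have hle : (n:ℝ) - 1 ≤ Real.sqrt (2 * y ^ s) := by
      have := Real.sqrt_le_sqrt hsq
      rwa [Real.sqrt_sq (by linarith : (0:ℝ) ≤ (n:ℝ) - 1)] at this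
    rw [hrpow, ← hsqrt]
    linarith
end

section
/- Let $p$ and $d$ be positive integers and $\mathcal{F}$ a $(p,d)$-cover free family of size $n$. Then the number of distinct sets obtainable as unions of exactly $d$ members of $\mathcal{F}$ is at least $\binom{n}{d} / \binom{d+p-1}{d}$. -/
open Finset

theorem pd_cover_free_unions_lower_bound {α : Type*} [DecidableEq α]
    (p d n : ℕ) (hp : 0 < p) (hd : 0 < d)
    (F : Finset (Finset α)) (hcard : F.card = n)
    (hcf : ∀ P T : Finset (Finset α), P ⊆ F → T ⊆ F → Disjoint P T →
      P.card = p → T.card = d → ¬ P.sup id ⊆ T.sup id) :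
    ((n.choose d : ℝ) / ((d + p - 1).choose d : ℝ)) ≤
      (((F.powersetCard d).image (fun T => T.sup id)).card : ℝ) := by
  have key : (F.powersetCard d).card ≤
      ((d + p - 1).choose d) * (((F.powersetCard d).image (fun T => T.sup id)).card) := by
    apply Finset.card_le_mul_card_image
    intro S hS
    -- the fiber over S
    set G : Finset (Finset α) := F.filter (fun A => A ⊆ S) with hG
    obtain ⟨T₀, hT₀mem, hT₀sup⟩ := Finset.mem_image.mp hS
    rw [Finset.mem_powersetCard] at hT₀mem
    obtain ⟨hT₀F, hT₀card⟩ := hT₀mem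
    have hT₀G : T₀ ⊆ G := by
      intro A hA
      exact Finset.mem_filter.mpr ⟨hT₀F hA, hT₀sup ▸ Finset.le_sup (f := id) hA⟩
    -- card G ≤ d + p - 1
    have hGcard : G.card ≤ d + p - 1 := by
      by_contra h
      push_neg at h
      have hge : d + p ≤ G.card := by omega
      have : p ≤ (G \ T₀).card := by
        have := Finset.le_card_sdiff T₀ G
        omega
      obtain ⟨P, hPsub, hPcard⟩ := Finset.exists_subset_card_eq this
      have hPG : P ⊆ G := hPsub.trans (Finset.sdiff_subset)
      refine hcf P T₀ (fun A hA => (Finset.mem_filter.mp (hPG hA)).1) hT₀F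
        ?_ hPcard hT₀card ?_
      · exact Finset.sdiff_disjoint.mono_left hPsub
      · rw [hT₀sup]
        show P.sup id ≤ S
        apply Finset.sup_le
        intro A hA
        exact (Finset.mem_filter.mp (hPG hA)).2
    -- fiber ⊆ powersetCard d G
    calc ((F.powersetCard d).filter (fun T => T.sup id = S)).card
        ≤ (G.powersetCard d).card := by
          apply Finset.card_le_card
          intro T hT
          rw [Finset.mem_filter, Finset.mem_powersetCard] at hT
          obtain ⟨⟨hTF, hTcard⟩, hTsup⟩ := hT
          rw [Finset.mem_powersetCard]
          refine ⟨fun A hA => Finset.mem_filter.mpr ⟨hTF hA, ?_⟩, hTcard⟩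
          exact hTsup ▸ Finset.le_sup (f := id) hA
      _ = G.card.choose d := by rw [Finset.card_powersetCard]
      _ ≤ (d + p - 1).choose d := Nat.choose_le_choose d hGcard
  have hpos : (0 : ℝ) < ((d + p - 1).choose d : ℝ) := by
    have : d ≤ d + p - 1 := by omega
    exact_mod_cast Nat.choose_pos this
  rw [div_le_iff₀ hpos]
  have : (n.choose d : ℝ) ≤ ((d + p - 1).choose d : ℝ) *
      (((F.powersetCard d).image (fun T => T.sup id)).card : ℝ) := by
    rw [← hcard, ← Finset.card_powersetCard]
    exact_mod_cast key
  linarith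
end

section
/- Let $q \geq 2d+2$ where $d \geq 1$ is an integer. Then $\frac{d}{q} - \frac{d}{d+1} + \ln\frac{q}{d+1} \geq \left(1 - \frac{1}{2\ln 2}\right)\ln\frac{q}{d+1}$. -/
theorem entropy_estimate (d q : ℕ) (hd : 1 ≤ d) (hq : 2 * d + 2 ≤ q) :
    (1 - 1 / (2 * Real.log 2)) * Real.log ((q : ℝ) / (d + 1)) ≤
      (d : ℝ) / q - (d : ℝ) / (d + 1) + Real.log ((q : ℝ) / (d + 1)) := by
  have hd' : (1 : ℝ) ≤ (d : ℝ) := by exact_mod_cast hd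
  have hq' : 2 * (d : ℝ) + 2 ≤ (q : ℝ) := by exact_mod_cast hq
  have hD : (0 : ℝ) < (d : ℝ) + 1 := by linarith
  have hQ : (0 : ℝ) < (q : ℝ) := by linarith
  set t : ℝ := ((d : ℝ) + 1) / q with ht_def
  have ht : 0 < t := div_pos hD hQ
  have ht2 : t ≤ 1 / 2 := by
    rw [ht_def, div_le_div_iff₀ hQ (by norm_num)]
    linarith
  -- key log bound: log t ≤ 2t - 1 - log 2
  have key : Real.log t ≤ 2 * t - 1 - Real.log 2 := by
    have h := Real.log_le_sub_one_of_pos (show (0:ℝ) < 2 * t by linarith)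
    rw [Real.log_mul (by norm_num) (ne_of_gt ht)] at h
    linarith
  have hlog2 : 0 < Real.log 2 := Real.log_pos (by norm_num)
  have hlog2' : Real.log 2 < 1 := by
    have := Real.log_two_lt_d9
    linarith
  -- 1 - t ≤ (-log t)/(2 log 2)
  have step1 : 2 * Real.log 2 * (1 - t) ≤ -Real.log t := by
    nlinarith [key, ht2, hlog2, hlog2']
  -- relation between logs
  have hL : Real.log ((q : ℝ) / (d + 1)) = -Real.log t := by
    rw [ht_def, ← Real.log_inv]
    congr 1
    field_simp
  -- arithmetic bound
  have step2 : (d : ℝ) / (d + 1) - (d : ℝ) / q ≤ 1 - t := by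
    rw [ht_def, div_sub_div _ _ (ne_of_gt hD) (ne_of_gt hQ), sub_div',
      div_le_div_iff₀ (by positivity) hQ]
    · ring_nf
      nlinarith
    · exact ne_of_gt hQ
  rw [hL]
  have h3 : (d : ℝ) / (d + 1) - (d : ℝ) / q ≤ (-Real.log t) / (2 * Real.log 2) := by
    rw [le_div_iff₀ (by positivity)]
    nlinarith [step1, step2, ht, hlog2]
  have expand : (1 - 1 / (2 * Real.log 2)) * (-Real.log t)
      = -Real.log t - (-Real.log t) / (2 * Real.log 2) := by
    field_simp
    ring
  rw [expand]
  linarith [h3]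
end
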